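/- The map φ defined by φ(r, x, y) = (5r, 5x + 9y, 6x + 11y) maps E bijectively onto E, maps E₊ onto E₊ (so φ is an order automorphism of (E, E₊)), and satisfies φ(1, 1, 0) = (5, 5, 6). -/
import Mathlib


/-- The additive subgroup `E` of `ℝ × ℤ × ℤ`: all triples `(r, x, y)` such that
`r = (j + k√3)/5^(6i)`, `x ≡ j (mod 9)` and `y ≡ k (mod 3)` for some integers `i, j, k`. -/
def Eset : Set (ℝ × ℤ × ℤ) :=
  {p | ∃ i j k : ℤ, p.1 = ((j : ℝ) + (k : ℝ) * Real.sqrt 3) / (5 : ℝ) ^ (6 * i) ∧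
    p.2.1 ≡ j [ZMOD 9] ∧ p.2.2 ≡ k [ZMOD 3]}

/-- The positive cone `E₊ = {(r, x, y) ∈ E : r > 0} ∪ {(0, 0, 0)}`. -/
def Epos : Set (ℝ × ℤ × ℤ) :=
  {p | p ∈ Eset ∧ 0 < p.1} ∪ {0}

/-- An order automorphism of `(E, E₊)`: an additive group automorphism of `E`
(a bijection of `E` onto itself which is additive on `E`) with `φ(E₊) = E₊`. -/
structure IsOrderAuto (φ : ℝ × ℤ × ℤ → ℝ × ℤ × ℤ) : Prop where
  bijOn : Set.BijOn φ Eset Eset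
  addOn : ∀ p ∈ Eset, ∀ q ∈ Eset, φ (p + q) = φ p + φ q
  posEq : φ '' Epos = Epos

/-- Inverse map. -/
noncomputable def psiAux : ℝ × ℤ × ℤ → ℝ × ℤ × ℤ :=
  fun p => (p.1 / 5, 11 * p.2.1 - 9 * p.2.2, -6 * p.2.1 + 5 * p.2.2)

lemma phi_psiAux (p : ℝ × ℤ × ℤ) :
    (fun p : ℝ × ℤ × ℤ => (5 * p.1, 5 * p.2.1 + 9 * p.2.2, 6 * p.2.1 + 11 * p.2.2))
      (psiAux p) = p := by
  obtain ⟨r, x, y⟩ := p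
  simp only [psiAux, Prod.mk.injEq]
  refine ⟨by ring, by ring, by ring⟩

lemma psiAux_phi (p : ℝ × ℤ × ℤ) :
    psiAux ((fun p : ℝ × ℤ × ℤ =>
      (5 * p.1, 5 * p.2.1 + 9 * p.2.2, 6 * p.2.1 + 11 * p.2.2)) p) = p := by
  obtain ⟨r, x, y⟩ := p
  simp only [psiAux, Prod.mk.injEq]
  refine ⟨by ring, by ring, by ring⟩

lemma phi_mem {p : ℝ × ℤ × ℤ} (hp : p ∈ Eset) :
    ((5 * p.1, 5 * p.2.1 + 9 * p.2.2, 6 * p.2.1 + 11 * p.2.2) : ℝ × ℤ × ℤ) ∈ Eset := by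
  obtain ⟨i, j, k, h1, h2, h3⟩ := hp
  refine ⟨i, 5 * j, 5 * k, ?_, ?_, ?_⟩
  · rw [h1]; push_cast; ring
  · simp only [Int.ModEq] at h2 ⊢; omega
  · simp only [Int.ModEq] at h3 ⊢; omega

lemma psiAux_mem {p : ℝ × ℤ × ℤ} (hp : p ∈ Eset) : psiAux p ∈ Eset := by
  obtain ⟨i, j, k, h1, h2, h3⟩ := hp
  refine ⟨i + 1, 3125 * j, 3125 * k, ?_, ?_, ?_⟩
  · have h5 : (5 : ℝ) ^ (6 * i) ≠ 0 := zpow_ne_zero _ (by norm_num)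
    simp only [psiAux]
    rw [h1, show (6 * (i + 1) : ℤ) = 6 * i + 6 by ring,
      zpow_add₀ (by norm_num : (5 : ℝ) ≠ 0)]
    push_cast
    field_simp
    ring
  · simp only [psiAux, Int.ModEq] at h2 ⊢; omega
  · simp only [psiAux, Int.ModEq] at h3 ⊢; omega

/-- The map `φ(r, x, y) = (5r, 5x + 9y, 6x + 11y)` maps `E` bijectively onto `E` and
maps `E₊` onto `E₊`, so `φ` is an order automorphism of `(E, E₊)`; moreover it sends
`(1, 1, 0)` to `(5, 5, 6)`. -/
theorem stmt_8 :
    IsOrderAuto (fun p : ℝ × ℤ × ℤ =>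
        (5 * p.1, 5 * p.2.1 + 9 * p.2.2, 6 * p.2.1 + 11 * p.2.2)) ∧
      (fun p : ℝ × ℤ × ℤ => (5 * p.1, 5 * p.2.1 + 9 * p.2.2, 6 * p.2.1 + 11 * p.2.2))
          ((1 : ℝ), (1 : ℤ), (0 : ℤ))
        = ((5 : ℝ), (5 : ℤ), (6 : ℤ)) := by
  constructor
  · constructor
    · refine ⟨fun p hp => phi_mem hp, ?_, ?_⟩
      · intro p _ q _ h
        have := congrArg psiAux h
        rwa [psiAux_phi, psiAux_phi] at this
      · intro q hq
        exact ⟨psiAux q, psiAux_mem hq, phi_psiAux q⟩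
    · intro p _ q _
      obtain ⟨r, x, y⟩ := p
      obtain ⟨r', x', y'⟩ := q
      simp only [Prod.mk_add_mk, Prod.mk.injEq]
      refine ⟨by ring, by ring, by ring⟩
    · ext q
      constructor
      · rintro ⟨p, hp, rfl⟩
        rcases hp with ⟨hpE, hpos⟩ | hp0
        · exact Or.inl ⟨phi_mem hpE, by simpa using by linarith⟩
        · right
          simp only [Set.mem_singleton_iff] at hp0 ⊢
          subst hp0
          simp [Prod.ext_iff]
      · intro hq
        refine ⟨psiAux q, ?_, phi_psiAux q⟩
        rcases hq with ⟨hqE, hpos⟩ | hq0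
        · exact Or.inl ⟨psiAux_mem hqE, by simp [psiAux]; linarith⟩
        · right
          simp only [Set.mem_singleton_iff] at hq0 ⊢
          subst hq0
          simp [psiAux, Prod.ext_iff]
  · norm_num
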